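/- (Lakatos–Losonczi) A self-inversive polynomial P(z) = Σ_{j=0}^d A_j z^j (A_j = ε conj(A_{d-j}), |ε| = 1, A_d ≠ 0) satisfying |A_d| ≥ (1/2) Σ_{j=1}^{d-1} |A_j| has all its zeros on the unit circle |z| = 1. -/

import Mathlib

/-!
Write `ε = e^{iβ}`. On the unit circle a self-inversive `P` satisfies
`P(e^{is}) = e^{i(β + ds)/2} R(s)` with `R = realAmplitude P d β` real, and
`R(s) = 2|A_d| cos(ds/2 + γ) + ρ(s)` for a constant `γ` and `|ρ(s)| ≤ Σ_{0<j<d} |A_j|`.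
If this sum is `< 2|A_d|`, the cosine term decides the sign of `R` at the `d + 1` points of a
period where it equals `±2|A_d|`, so `R` changes sign `d` times and `P` has `d` distinct zeros
on the circle: these are all its zeros.

In the boundary case, multiply `A_0` and `A_d` by `1 + r` (`r > 0`). This keeps `P`
self-inversive and makes the inequality strict, so the new polynomial `Q_r` has all its zeros
on the circle, whence `|A_d| · |‖z‖ - 1|^d ≤ |Q_r(z)| = r |A_d z^d + A_0|` at a zero `z` of `P`.
Letting `r → 0` gives `‖z‖ = 1`.
-/

open Polynomial Complex Finset ComplexConjugate Filter Topology

theorem exists_zero_mem_Ioo_of_alternating {g : ℝ → ℝ} (hg : Continuous g) {t : ℕ → ℝ}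
    (ht : Monotone t) (halt : ∀ k, 0 < (-1) ^ k * g (t k)) (k : ℕ) :
    ∃ s ∈ Set.Ioo (t k) (t (k + 1)), g s = 0 := by
  have hk := halt k
  have hk1 := halt (k + 1)
  rw [pow_succ] at hk1
  have hle := ht k.le_succ
  rcases neg_one_pow_eq_or ℝ k with h | h <;> rw [h] at hk hk1
  · exact intermediate_value_Ioo' hle hg.continuousOn ⟨by linarith, by linarith⟩
  · exact intermediate_value_Ioo hle hg.continuousOn ⟨by linarith, by linarith⟩

theorem injOn_exp_ofReal_mul_I_Ico {a b : ℝ} (h : b - a ≤ 2 * Real.pi) :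
    Set.InjOn (fun s : ℝ => cexp (s * I)) (Set.Ico a b) := fun _ hx _ hy hxy =>
  Circle.exp_injOn_Ico h hx hy (Subtype.ext (by simpa only [Circle.coe_exp] using hxy))

theorem conj_exp_ofReal_mul_I (x : ℝ) : conj (cexp (x * I)) = cexp ((-x : ℝ) * I) := by
  rw [← exp_conj, map_mul, conj_ofReal, conj_I, ofReal_neg, neg_mul, mul_neg]

theorem norm_eq_abs_re_conj_mul {v w : ℂ} (hv : ‖v‖ = 1) (hw : w = v ^ 2 * conj w) :
    ‖w‖ = |(conj v * w).re| := by
  have hvv : conj v * v = 1 := by rw [mul_comm, mul_conj, normSq_eq_norm_sq, hv]; norm_num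
  have hreal : conj (conj v * w) = conj v * w := by
    conv_rhs => rw [hw]
    rw [map_mul, conj_conj]
    linear_combination (-(v * conj w)) * hvv
  rw [abs_re_eq_norm.mpr (conj_eq_iff_im.mp hreal), norm_mul, norm_conj, hv, one_mul]

namespace Polynomial

theorem eval_eq_coeff_zero_add_sum_Ioo_add {R : Type*} [CommSemiring R] {p : R[X]} {d : ℕ}
    (hp : p.natDegree ≤ d) (hd : 0 < d) (x : R) :
    p.eval x = p.coeff 0 + ∑ j ∈ Ioo 0 d, p.coeff j * x ^ j + p.coeff d * x ^ d := by
  rw [eval_eq_sum_range' (Nat.lt_add_one_of_le hp), range_eq_Ico, Ico_add_one_right_eq_Icc,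
    ← add_sum_Ioc_eq_sum_Icc (Nat.zero_le d), ← add_sum_Ioo_eq_sum_Ioc hd]
  simp only [pow_zero, mul_one]
  ring

theorem mem_of_isRoot_of_natDegree_le_card {R : Type*} [CommRing R] [IsDomain R]
    [DecidableEq R] {p : R[X]} (hp : p ≠ 0) {s : Finset R} (hs : ∀ x ∈ s, p.IsRoot x)
    (hcard : p.natDegree ≤ s.card) {z : R} (hz : p.IsRoot z) : z ∈ s := by
  have hsub : s ⊆ p.roots.toFinset := fun x hx => by simpa [hp] using hs x hx
  have heq : s = p.roots.toFinset :=
    eq_of_subset_of_card_le hsub <|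
      (p.roots.toFinset_card_le.trans (card_roots' p)).trans hcard
  rw [heq]
  simpa [hp] using hz

theorem norm_leadingCoeff_mul_pow_le_norm_eval {K : Type*} [NormedField K] [IsAlgClosed K]
    {p : K[X]} {z : K} {c : ℝ} (hc : 0 ≤ c) (h : ∀ w ∈ p.roots, c ≤ ‖z - w‖) :
    ‖p.leadingCoeff‖ * c ^ p.natDegree ≤ ‖p.eval z‖ := by
  conv_rhs => rw [← C_leadingCoeff_mul_prod_multiset_X_sub_C
    (IsAlgClosed.card_roots_eq_natDegree (p := p))]
  have hnorm (m : Multiset K) : ‖m.prod‖ = (m.map (‖·‖)).prod :=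
    map_multiset_prod (normHom : K →*₀ ℝ) m
  rw [eval_mul, eval_C, norm_mul, eval_multiset_prod, hnorm, Multiset.map_map, Multiset.map_map,
    ← IsAlgClosed.card_roots_eq_natDegree]
  gcongr
  calc c ^ Multiset.card p.roots = (p.roots.map fun _ => c).prod := by simp
    _ ≤ _ := Multiset.prod_map_le_prod_map₀ _ _ (fun _ _ => hc) (by simpa using h)

noncomputable def scaleEnds {R : Type*} [CommSemiring R] (p : R[X]) (d : ℕ) (r : R) : R[X] :=
  p + C r * (C (p.coeff d) * X ^ d + C (p.coeff 0))

theorem coeff_scaleEnds {R : Type*} [CommSemiring R] (p : R[X]) {d : ℕ} (hd : d ≠ 0) (r : R)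
    (j : ℕ) :
    (p.scaleEnds d r).coeff j = if j = 0 ∨ j = d then (1 + r) * p.coeff j else p.coeff j := by
  simp only [scaleEnds, coeff_add, coeff_C_mul, coeff_C]
  rcases eq_or_ne j 0 with rfl | hj0
  · simp [hd.symm]; ring
  rcases eq_or_ne j d with rfl | hjd
  · simp [hj0]; ring
  · simp [hj0, hjd]

def IsSelfInversive (P : ℂ[X]) (d : ℕ) (ε : ℂ) : Prop :=
  ∀ j ≤ d, P.coeff j = ε * conj (P.coeff (d - j))

noncomputable def realAmplitude (P : ℂ[X]) (d : ℕ) (β s : ℝ) : ℝ :=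
  (conj (cexp (((β + d * s) / 2 : ℝ) * I)) * P.eval (cexp (s * I))).re

theorem continuous_realAmplitude (P : ℂ[X]) (d : ℕ) (β : ℝ) :
    Continuous (P.realAmplitude d β) := by
  unfold realAmplitude
  fun_prop

namespace IsSelfInversive

variable {P Q : ℂ[X]} {d : ℕ} {ε : ℂ}

theorem add (hP : IsSelfInversive P d ε) (hQ : IsSelfInversive Q d ε) :
    IsSelfInversive (P + Q) d ε := fun j hj => by
  simp only [coeff_add, map_add, hP j hj, hQ j hj, mul_add]

theorem C_ofReal_mul (hP : IsSelfInversive P d ε) (r : ℝ) :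
    IsSelfInversive (C (r : ℂ) * P) d ε := fun j hj => by
  simp only [coeff_C_mul, map_mul, conj_ofReal, hP j hj]
  ring

theorem extremes (hP : IsSelfInversive P d ε) :
    IsSelfInversive (C (P.coeff d) * X ^ d + C (P.coeff 0)) d ε := fun j hj => by
  have h0 := hP 0 (Nat.zero_le d)
  have hd := hP d le_rfl
  simp only [Nat.sub_zero, Nat.sub_self] at h0 hd
  simp only [coeff_add, coeff_C_mul_X_pow, coeff_C]
  rcases eq_or_ne j 0 with rfl | hj0
  · rcases eq_or_ne d 0 with rfl | hd0
    · simp only [if_true, map_add, mul_add, ← h0]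
    · simp only [Nat.sub_zero, if_true, if_neg hd0, if_neg hd0.symm, zero_add, add_zero, ← h0]
  rcases eq_or_ne j d with rfl | hjd
  · simp only [Nat.sub_self, if_true, if_neg hj0, if_neg hj0.symm, zero_add, add_zero, ← hd]
  · have h1 : d - j ≠ d := by omega
    have h2 : d - j ≠ 0 := by omega
    simp only [if_neg hj0, if_neg hjd, if_neg h1, if_neg h2, add_zero, map_zero, mul_zero]

theorem scaleEnds (hP : IsSelfInversive P d ε) (r : ℝ) :
    IsSelfInversive (P.scaleEnds d (r : ℂ)) d ε :=
  hP.add (hP.extremes.C_ofReal_mul r)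

theorem eval_eq (hP : IsSelfInversive P d ε) (hd : P.natDegree ≤ d) {z : ℂ} (hz : ‖z‖ = 1) :
    P.eval z = ε * z ^ d * conj (P.eval z) := by
  have hzz : z * conj z = 1 := by rw [mul_conj, normSq_eq_norm_sq, hz]; norm_num
  rw [eval_eq_sum_range' (Nat.lt_add_one_of_le hd), map_sum, mul_sum,
    ← sum_range_reflect _ (d + 1)]
  refine sum_congr rfl fun j hj => ?_
  obtain ⟨k, rfl⟩ := Nat.exists_eq_add_of_le (Nat.lt_add_one_iff.mp (mem_range.mp hj))
  rw [Nat.add_sub_cancel, Nat.add_sub_cancel_left, hP k (by omega), Nat.add_sub_cancel,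
    map_mul, map_pow, pow_add]
  linear_combination (-(ε * conj (P.coeff j) * z ^ k)) * congrArg (· ^ j) hzz

theorem norm_eval_exp_eq_abs_realAmplitude (hP : IsSelfInversive P d ε) (hd : P.natDegree ≤ d)
    {β : ℝ} (hβ : ε = cexp (β * I)) (s : ℝ) :
    ‖P.eval (cexp (s * I))‖ = |P.realAmplitude d β s| := by
  refine norm_eq_abs_re_conj_mul (norm_exp_ofReal_mul_I _) ?_
  have hsq : cexp (((β + d * s) / 2 : ℝ) * I) ^ 2 = ε * cexp (s * I) ^ d := by
    rw [hβ, ← exp_nat_mul, ← exp_nat_mul, ← exp_add]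
    congr 1
    push_cast
    ring
  rw [hsq]
  exact hP.eval_eq hd (norm_exp_ofReal_mul_I s)

theorem abs_realAmplitude_sub_cos_le (hP : IsSelfInversive P d ε) (hd : P.natDegree ≤ d)
    (hd0 : 0 < d) {α β : ℝ} (hα : P.coeff d = ‖P.coeff d‖ * cexp (α * I))
    (hβ : ε = cexp (β * I)) (s : ℝ) :
    |P.realAmplitude d β s - 2 * ‖P.coeff d‖ * Real.cos (d * s / 2 + (α - β / 2))|
      ≤ ∑ j ∈ Ioo 0 d, ‖P.coeff j‖ := by
  set a := ‖P.coeff d‖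
  set θ := d * s / 2 + (α - β / 2)
  set v := cexp (((β + d * s) / 2 : ℝ) * I)
  set M := ∑ j ∈ Ioo 0 d, P.coeff j * cexp (s * I) ^ j
  have hlead : conj v * (P.coeff d * cexp (s * I) ^ d) = a * cexp (θ * I) := by
    rw [hα, conj_exp_ofReal_mul_I, ← exp_nat_mul, mul_left_comm, mul_assoc, ← exp_add,
      ← exp_add]
    congr 2
    push_cast [θ]
    ring
  have hconst : conj v * P.coeff 0 = a * cexp ((-θ : ℝ) * I) := by
    rw [show P.coeff 0 = ε * conj (P.coeff d) by simpa using hP 0 (Nat.zero_le d), hβ, hα,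
      map_mul, conj_ofReal, conj_exp_ofReal_mul_I, conj_exp_ofReal_mul_I,
      show ∀ x y w : ℂ, x * (y * (a * w)) = a * (x * y * w) from fun _ _ _ => by ring,
      ← exp_add, ← exp_add]
    congr 2
    push_cast [θ]
    ring
  have hM : ‖conj v * M‖ ≤ ∑ j ∈ Ioo 0 d, ‖P.coeff j‖ := by
    rw [norm_mul, norm_conj, norm_exp_ofReal_mul_I, one_mul]
    refine (norm_sum_le _ _).trans (le_of_eq (sum_congr rfl fun j _ => ?_))
    rw [norm_mul, norm_pow, norm_exp_ofReal_mul_I, one_pow, mul_one]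
  have hsplit : P.realAmplitude d β s = 2 * a * Real.cos θ + (conj v * M).re := by
    rw [realAmplitude, eval_eq_coeff_zero_add_sum_Ioo_add hd hd0, mul_add, mul_add, add_re,
      add_re, hconst, hlead, re_ofReal_mul, re_ofReal_mul, exp_ofReal_mul_I_re,
      exp_ofReal_mul_I_re, Real.cos_neg]
    ring
  rw [hsplit, add_sub_cancel_left]
  exact (abs_re_le_norm _).trans hM

theorem neg_one_pow_mul_realAmplitude_pos (hP : IsSelfInversive P d ε) (hd : P.natDegree ≤ d)
    (hd0 : 0 < d) {α β : ℝ} (hα : P.coeff d = ‖P.coeff d‖ * cexp (α * I))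
    (hβ : ε = cexp (β * I)) (hlt : ∑ j ∈ Ioo 0 d, ‖P.coeff j‖ < 2 * ‖P.coeff d‖) (k : ℕ) :
    0 < (-1) ^ k * P.realAmplitude d β (2 * (k * Real.pi - (α - β / 2)) / d) := by
  have hnode : d * (2 * (k * Real.pi - (α - β / 2)) / d) / 2 + (α - β / 2) = k * Real.pi := by
    field_simp
    ring
  have h := abs_le.mp (hP.abs_realAmplitude_sub_cos_le hd hd0 hα hβ
    (2 * (k * Real.pi - (α - β / 2)) / d))
  rw [hnode, Real.cos_nat_mul_pi] at h
  rcases neg_one_pow_eq_or ℝ k with h1 | h1 <;> rw [h1] at h ⊢ <;> linarith [h.1, h.2]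

theorem exists_finset_isRoot_norm_eq_one (hP : IsSelfInversive P d ε) (hd : P.natDegree ≤ d)
    (hd0 : 0 < d) (hε : ‖ε‖ = 1) (hlt : ∑ j ∈ Ioo 0 d, ‖P.coeff j‖ < 2 * ‖P.coeff d‖) :
    ∃ S : Finset ℂ, S.card = d ∧ ∀ x ∈ S, P.IsRoot x ∧ ‖x‖ = 1 := by
  set α := (P.coeff d).arg
  set β := ε.arg
  have hα : P.coeff d = ‖P.coeff d‖ * cexp (α * I) := (norm_mul_exp_arg_mul_I _).symm
  have hβ : ε = cexp (β * I) := by simpa [hε] using (norm_mul_exp_arg_mul_I ε).symm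
  set t : ℕ → ℝ := fun k => 2 * (k * Real.pi - (α - β / 2)) / d
  have ht : StrictMono t := strictMono_nat_of_lt_succ fun k => by
    simp only [t]
    gcongr
    linarith [Real.pi_pos]
  have hperiod : t d - t 0 = 2 * Real.pi := by
    simp only [t]
    field_simp
    ring
  choose s hs hzero using exists_zero_mem_Ioo_of_alternating (continuous_realAmplitude P d β)
    ht.monotone (hP.neg_one_pow_mul_realAmplitude_pos hd hd0 hα hβ hlt)
  have hs_mono : StrictMono s :=
    strictMono_nat_of_lt_succ fun k => (hs k).2.trans (hs (k + 1)).1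
  have hmaps : Set.MapsTo s (range d) (Set.Ico (t 0) (t d)) := fun k hk =>
    ⟨(ht.monotone k.zero_le).trans (hs k).1.le,
      (hs k).2.trans_le (ht.monotone (mem_range.mp hk))⟩
  have hinj : Set.InjOn (fun k => cexp (s k * I)) (range d) :=
    (injOn_exp_ofReal_mul_I_Ico hperiod.le).comp hs_mono.injective.injOn hmaps
  refine ⟨(range d).image fun k => cexp (s k * I), by rw [card_image_of_injOn hinj, card_range],
    ?_⟩
  simp only [mem_image, forall_exists_index, and_imp, forall_apply_eq_imp_iff₂]
  intro k _
  rw [IsRoot, ← norm_eq_zero, hP.norm_eval_exp_eq_abs_realAmplitude hd hβ, hzero, abs_zero]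
  exact ⟨rfl, norm_exp_ofReal_mul_I _⟩

theorem norm_eq_one_of_isRoot_of_sum_lt (hP : IsSelfInversive P d ε) (hd : P.natDegree = d)
    (hd0 : 0 < d) (hε : ‖ε‖ = 1) (hlt : ∑ j ∈ Ioo 0 d, ‖P.coeff j‖ < 2 * ‖P.coeff d‖)
    {z : ℂ} (hz : P.IsRoot z) : ‖z‖ = 1 := by
  obtain ⟨S, hcard, hS⟩ := hP.exists_finset_isRoot_norm_eq_one hd.le hd0 hε hlt
  have hP0 : P ≠ 0 := ne_zero_of_natDegree_gt (hd ▸ hd0)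
  exact (hS z <| mem_of_isRoot_of_natDegree_le_card hP0 (fun x hx => (hS x hx).1)
    (hcard ▸ hd.le) hz).2

theorem mul_pow_le_norm_eval_scaleEnds (hP : IsSelfInversive P d ε) (hd : P.natDegree = d)
    (hd0 : 0 < d) (hε : ‖ε‖ = 1) (hAd : P.coeff d ≠ 0)
    (hle : ∑ j ∈ Ioo 0 d, ‖P.coeff j‖ ≤ 2 * ‖P.coeff d‖) {r : ℝ} (hr : 0 < r) (z : ℂ) :
    ‖P.coeff d‖ * |‖z‖ - 1| ^ d ≤ ‖(P.scaleEnds d (r : ℂ)).eval z‖ := by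
  set Q := P.scaleEnds d (r : ℂ)
  have hcoeff := P.coeff_scaleEnds hd0.ne' (r : ℂ)
  have hQd : Q.coeff d = ((1 + r : ℝ) : ℂ) * P.coeff d := by simp [Q, hcoeff]
  have hQdeg : Q.natDegree = d := by
    refine natDegree_eq_of_le_of_coeff_ne_zero (natDegree_le_iff_coeff_eq_zero.mpr
      fun N hN => ?_) (hQd ▸ mul_ne_zero (ofReal_ne_zero.mpr (by positivity)) hAd)
    rw [hcoeff, if_neg (by omega), coeff_eq_zero_of_natDegree_lt (hd ▸ hN)]
  have hmid : ∑ j ∈ Ioo 0 d, ‖Q.coeff j‖ = ∑ j ∈ Ioo 0 d, ‖P.coeff j‖ :=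
    sum_congr rfl fun j hj => by
      rw [mem_Ioo] at hj
      rw [hcoeff, if_neg (by omega)]
  have hQdnorm : ‖Q.coeff d‖ = (1 + r) * ‖P.coeff d‖ := by
    rw [hQd, norm_mul, norm_real, Real.norm_of_nonneg (by positivity)]
  have hQroots (w : ℂ) (hw : w ∈ Q.roots) : ‖w‖ = 1 := by
    refine (hP.scaleEnds r).norm_eq_one_of_isRoot_of_sum_lt hQdeg hd0 hε ?_
      (isRoot_of_mem_roots hw)
    rw [hmid, hQdnorm]
    nlinarith [norm_pos_iff.mpr hAd]
  calc ‖P.coeff d‖ * |‖z‖ - 1| ^ d ≤ ‖Q.leadingCoeff‖ * |‖z‖ - 1| ^ Q.natDegree := by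
        rw [leadingCoeff, hQdeg, hQdnorm]
        gcongr
        nlinarith [norm_nonneg (P.coeff d)]
    _ ≤ ‖Q.eval z‖ := norm_leadingCoeff_mul_pow_le_norm_eval (abs_nonneg _)
        fun w hw => hQroots w hw ▸ abs_norm_sub_norm_le z w

end IsSelfInversive

end Polynomial

theorem stmt_10 (P : Polynomial ℂ) (d : ℕ) (ε : ℂ) (hd : P.natDegree = d)
    (hAd : P.coeff d ≠ 0) (hε : ‖ε‖ = 1)
    (hsi : ∀ j ≤ d, P.coeff j = ε * (starRingEnd ℂ) (P.coeff (d - j)))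
    (hineq : (1 / 2 : ℝ) * ∑ j ∈ Finset.Ioo 0 d, ‖P.coeff j‖
      ≤ ‖P.coeff d‖) :
    ∀ z : ℂ, P.eval z = 0 → ‖z‖ = 1 := by
  intro z hz
  have hd0 : 0 < d :=
    hd ▸ natDegree_pos_iff_degree_pos.mpr (degree_pos_of_root (fun h => hAd (by simp [h])) hz)
  set K := ‖(C (P.coeff d) * X ^ d + C (P.coeff 0)).eval z‖
  have hbound (r : ℝ) (hr : 0 < r) : ‖P.coeff d‖ * |‖z‖ - 1| ^ d ≤ r * K := by
    simpa [scaleEnds, hz, K, abs_of_pos hr] using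
      IsSelfInversive.mul_pow_le_norm_eval_scaleEnds hsi hd hd0 hε hAd (by linarith) hr z
  have hlim : Tendsto (fun r : ℝ => r * K) (𝓝[>] 0) (𝓝 0) := by
    simpa using ((continuous_mul_const K).tendsto 0).mono_left nhdsWithin_le_nhds
  have hzero : ‖P.coeff d‖ * |‖z‖ - 1| ^ d ≤ 0 :=
    ge_of_tendsto hlim (eventually_nhdsWithin_of_forall hbound)
  have hpow : |‖z‖ - 1| ^ d = 0 :=
    le_antisymm (nonpos_of_mul_nonpos_right hzero (norm_pos_iff.mpr hAd)) (by positivity)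
  simpa [hd0.ne', sub_eq_zero] using hpow
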